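/- Let T be a balanced AND-OR tree and let d be an independent distribution on T under which the probability of the root having value 0 is either 0 or 1. Then there exists a depth-first directional algorithm B₀ with cost(B₀,d) = min over all algorithms A of cost(A,d). -/

import Mathlib

open scoped BigOperators

/-! ## A framework for balanced AND-OR trees, algorithms and costs

A balanced tree of height `n` with branching factors `b 0, b 1, ...` (by depth):
a leaf is a path, i.e. an element of `∀ i : Fin n, Fin (b i)`; an internal node
is identified with its path, a list of child indices of length `< n`.
`rootAnd = true` means nodes at even depth are AND gates (an AND-OR tree);
`rootAnd = false` means the root is an OR gate (an OR-AND tree).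
Boolean `true` stands for the value 1 and `false` for the value 0. -/

/-- Leaves of the balanced tree of height `n` with branching factors `b`. -/
abbrev Leaf (n : ℕ) (b : ℕ → ℕ) : Type := ∀ i : Fin n, Fin (b i)

/-- The path (list of child indices) of a leaf. -/
def Leaf.toList {n : ℕ} {b : ℕ → ℕ} (l : Leaf n b) : List ℕ :=
  List.ofFn fun i => (l i : ℕ)

/-- Leaf `l` lies below the node with path `u` (i.e. `u` is an ancestor-or-self of `l`). -/
def Below {n : ℕ} {b : ℕ → ℕ} (u : List ℕ) (l : Leaf n b) : Prop :=
  u <+: l.toList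

/-- Value, under the assignment `v` to the leaves, of the node with path `u`,
where `fuel` is the remaining height below `u`. -/
def evalAux (rootAnd : Bool) {n : ℕ} {b : ℕ → ℕ} (v : Leaf n b → Bool) :
    ℕ → List ℕ → Bool
  | 0, u => decide (∀ l : Leaf n b, Leaf.toList l = u → v l = true)
  | fuel+1, u =>
      if (u.length % 2 == 0) == rootAnd then
        decide (∀ j, j < b u.length → evalAux rootAnd v fuel (u ++ [j]) = true)
      else
        decide (∃ j, j < b u.length ∧ evalAux rootAnd v fuel (u ++ [j]) = true)

/-- Value of the node with path `u` in the height-`n` tree. -/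
def nodeVal (rootAnd : Bool) (n : ℕ) (b : ℕ → ℕ) (v : Leaf n b → Bool) (u : List ℕ) : Bool :=
  evalAux rootAnd v (n - u.length) u

/-- Value of the root of the tree. -/
def rootVal (rootAnd : Bool) (n : ℕ) (b : ℕ → ℕ) (v : Leaf n b → Bool) : Bool :=
  nodeVal rootAnd n b v []

/-- Deterministic leaf-querying algorithms (decision trees): either announce the
result, or query a leaf and continue depending on the answer. -/
inductive Alg (L : Type) : Type
  | result : Bool → Alg L
  | query : L → (Bool → Alg L) → Alg L

/-- The sequence of leaves queried by `A` on the assignment `v`, in order. -/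
def Alg.run {L : Type} : Alg L → (L → Bool) → List L
  | .result _, _ => []
  | .query l next, v => l :: (next (v l)).run v

/-- The output of `A` on the assignment `v`. -/
def Alg.output {L : Type} : Alg L → (L → Bool) → Bool
  | .result c, _ => c
  | .query l next, v => (next (v l)).output v

/-- `A` is an algorithm for the tree: it queries each leaf at most once and, for every
Boolean assignment to the leaves, it determines (outputs) the value of the root. -/
def IsAlg (rootAnd : Bool) (n : ℕ) (b : ℕ → ℕ) (A : Alg (Leaf n b)) : Prop :=
  (∀ v, (A.run v).Nodup) ∧ (∀ v, A.output v = rootVal rootAnd n b v)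

/-- An independent distribution: each leaf `l` independently has value 0
with probability `d l`. -/
def IsID {n : ℕ} {b : ℕ → ℕ} (d : Leaf n b → ℝ) : Prop := ∀ l, 0 ≤ d l ∧ d l ≤ 1

/-- An independent and identical distribution: an ID with all leaf probabilities equal. -/
def IsIID {n : ℕ} {b : ℕ → ℕ} (d : Leaf n b → ℝ) : Prop :=
  IsID d ∧ ∀ l l', d l = d l'

/-- Probability of the full assignment `v` under the independent distribution `d`. -/
noncomputable def assgProb {n : ℕ} {b : ℕ → ℕ} (d : Leaf n b → ℝ) (v : Leaf n b → Bool) : ℝ :=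
  ∏ l : Leaf n b, if v l then 1 - d l else d l

/-- Expected number of leaf queries of `A` under the independent distribution `d`. -/
noncomputable def cost {n : ℕ} {b : ℕ → ℕ} (A : Alg (Leaf n b)) (d : Leaf n b → ℝ) : ℝ :=
  ∑ v : Leaf n b → Bool, assgProb d v * ((A.run v).length : ℝ)

/-- Probability, under `d`, that the root has value 0. -/
noncomputable def rootZeroProb (rootAnd : Bool) (n : ℕ) (b : ℕ → ℕ) (d : Leaf n b → ℝ) : ℝ :=
  ∑ v : Leaf n b → Bool, if rootVal rootAnd n b v = false then assgProb d v else 0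

/-- The value of the node with path `u` is determined by the answers (recorded in `v`)
to the queries listed in `S`: all assignments consistent with these answers give the
node the same value. -/
def Determines (rootAnd : Bool) (n : ℕ) (b : ℕ → ℕ) (S : List (Leaf n b))
    (v : Leaf n b → Bool) (u : List ℕ) : Prop :=
  ∃ c : Bool, ∀ w : Leaf n b → Bool, (∀ l ∈ S, w l = v l) → nodeVal rootAnd n b w u = c

/-- `A` is depth-first: for every internal node `u`, once `A` queries a leaf below `u`,
it does not query any leaf not below `u` until the value of `u` is determined by the
answers received. -/
def DepthFirst (rootAnd : Bool) (n : ℕ) (b : ℕ → ℕ) (A : Alg (Leaf n b)) : Prop :=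
  ∀ v : Leaf n b → Bool, ∀ u : List ℕ, u.length < n →
    ∀ i j : ℕ, ∀ hij : i < j, ∀ hj : j < (A.run v).length,
      Below u ((A.run v)[i]'(hij.trans hj)) → ¬ Below u ((A.run v)[j]'hj) →
      Determines rootAnd n b ((A.run v).take j) v u

/-- `A` is directional: there is a fixed linear order (an injective ranking) of the
leaves such that on every assignment `A` queries leaves in increasing order. -/
def Directional {n : ℕ} {b : ℕ → ℕ} (A : Alg (Leaf n b)) : Prop :=
  ∃ rank : Leaf n b → ℕ, Function.Injective rank ∧
    ∀ v, ((A.run v).map rank).Pairwise (· < ·)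

/-- The minimum of `cost (A, d)` over all algorithms `A` for the tree. -/
noncomputable def minCost (rootAnd : Bool) (n : ℕ) (b : ℕ → ℕ) (d : Leaf n b → ℝ) : ℝ :=
  sInf {c : ℝ | ∃ A : Alg (Leaf n b), IsAlg rootAnd n b A ∧ c = cost A d}

/-- The minimum of `cost (A, d)` over all depth-first algorithms `A` for the tree. -/
noncomputable def minCostDF (rootAnd : Bool) (n : ℕ) (b : ℕ → ℕ) (d : Leaf n b → ℝ) : ℝ :=
  sInf {c : ℝ | ∃ A : Alg (Leaf n b),
    IsAlg rootAnd n b A ∧ DepthFirst rootAnd n b A ∧ c = cost A d}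

/-! Since the root value is 0 or 1 with probability one, there is a value `t` that the root takes
on every assignment of positive probability. On such an assignment every algorithm must have
queried a certificate for "the root has value `t`". At a gate for which `t` is the neutral value
(AND with `t = 1`, OR with `t = 0`) such a certificate contains certificates for all children,
elsewhere for at least one child, so it has at least `certSize n b t 0` leaves.

Conversely, at a node surely of value `t` whose gate needs only one child of value `t`, some child
is itself surely of value `t`: otherwise positive-probability witnesses for the children could be
glued, subtree by subtree, into one against the node. Hence the depth-first, directional algorithm
that always tries such a child first queries exactly `certSize n b t 0` leaves on every assignment
of positive probability, which is optimal. -/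

namespace List

variable {α : Type*}

def takeThrough (p : α → Bool) : List α → List α
  | [] => []
  | x :: xs => x :: if p x then takeThrough p xs else []

theorem takeThrough_sublist (p : α → Bool) (l : List α) : l.takeThrough p <+ l := by
  induction l with
  | nil => exact .slnil
  | cons x xs ih =>
    rw [takeThrough]
    split
    · exact ih.cons_cons x
    · exact (nil_sublist xs).cons_cons x

theorem takeThrough_eq_self {p : α → Bool} {l : List α} (h : ∀ x ∈ l, p x) :
    l.takeThrough p = l := by
  induction l with
  | nil => rfl
  | cons x xs ih => simp_all [takeThrough]

theorem IsPrefix.append_getElem {w u : List α} (h : w <+: u) (hlt : w.length < u.length) :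
    w ++ [u[w.length]] <+: u := by
  have := take_concat_get hlt
  rw [concat_eq_append, ← prefix_iff_eq_take.mp h] at this
  exact this ▸ take_prefix _ _

end List

def BlockOrAvoids {α : Type*} (P : α → Prop) (M L : List α) : Prop :=
  (∀ x ∈ L, ¬ P x) ∨ ∃ p s, L = p ++ M ++ s ∧ (∀ x ∈ p, ¬ P x) ∧ ∀ x ∈ s, ¬ P x

namespace BlockOrAvoids

variable {α : Type*} {P : α → Prop} {M L : List α}

theorem self : BlockOrAvoids P M M :=
  Or.inr ⟨[], [], by simp, by simp, by simp⟩

theorem append {A C : List α} (hA : ∀ x ∈ A, ¬ P x) (hL : BlockOrAvoids P M L)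
    (hC : ∀ x ∈ C, ¬ P x) : BlockOrAvoids P M (A ++ L ++ C) := by
  rcases hL with hL | ⟨p, s, rfl, hp, hs⟩
  · refine Or.inl fun x hx => ?_
    rcases List.mem_append.mp hx with hx | hx
    · exact (List.mem_append.mp hx).elim (hA x) (hL x)
    · exact hC x hx
  · refine Or.inr ⟨A ++ p, s ++ C, by simp, fun x hx => ?_, fun x hx => ?_⟩
    · exact (List.mem_append.mp hx).elim (hA x) (hp x)
    · exact (List.mem_append.mp hx).elim (hs x) (hC x)

theorem infix_take (h : BlockOrAvoids P M L) (hM : ∀ x ∈ M, P x) {i j : ℕ} (hij : i < j)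
    (hj : j < L.length) (hi : P (L[i]'(hij.trans hj))) (hj' : ¬ P L[j]) :
    M <:+: L.take j := by
  rcases h with hL | ⟨p, s, rfl, hp, hs⟩
  · exact absurd hi (hL _ (List.getElem_mem _))
  have hpi : p.length ≤ i := by
    by_contra hlt
    refine hp _ (List.getElem_mem (n := i) (by omega)) ?_
    simpa [List.getElem_append_left, show i < p.length by omega] using hi
  have hpj : p.length + M.length ≤ j := by
    by_contra hlt
    refine hj' ?_
    have := hM _ (List.getElem_mem (n := j - p.length) (by omega))
    simpa [List.getElem_append, show j < p.length + M.length by omega,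
      show ¬ j < p.length by omega, show j - p.length < M.length by omega] using this
  rw [List.take_append, List.take_of_length_le (by simp; omega)]
  exact ⟨p, _, rfl⟩

end BlockOrAvoids

namespace Alg

variable {L : Type}

def bind : Alg L → (Bool → Alg L) → Alg L
  | .result c, k => k c
  | .query l next, k => .query l fun a => (next a).bind k

theorem run_bind (A : Alg L) (k : Bool → Alg L) (v : L → Bool) :
    (A.bind k).run v = A.run v ++ (k (A.output v)).run v := by
  induction A with
  | result c => rfl
  | query l next ih => simp [bind, run, output, ih]

theorem output_bind (A : Alg L) (k : Bool → Alg L) (v : L → Bool) :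
    (A.bind k).output v = (k (A.output v)).output v := by
  induction A with
  | result c => rfl
  | query l next ih => simp [bind, output, ih]

theorem output_congr {A : Alg L} {v w : L → Bool} (h : ∀ l ∈ A.run v, w l = v l) :
    A.output w = A.output v := by
  induction A with
  | result c => rfl
  | query l next ih =>
    simp only [run, List.mem_cons, forall_eq_or_imp] at h
    simp only [output, h.1, ih _ h.2]

/-- `a` is the neutral value of the gate: `true` for AND, `false` for OR. -/
def gate {ι : Type*} (a : Bool) (child : ι → Alg L) : List ι → Alg L
  | [] => .result a
  | j :: js => (child j).bind fun c => if c = a then gate a child js else .result c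

variable {ι : Type*} (a : Bool) (child : ι → Alg L) (v : L → Bool)

theorem output_gate (js : List ι) :
    (gate a child js).output v = if ∀ j ∈ js, (child j).output v = a then a else !a := by
  induction js with
  | nil => simp [gate, output]
  | cons j js ih =>
    rw [gate, output_bind]
    by_cases h : (child j).output v = a
    · simp [h, ih]
    · cases a <;> simp_all [output]

theorem run_gate (js : List ι) :
    (gate a child js).run v =
      (js.takeThrough fun j => (child j).output v == a).flatMap fun j => (child j).run v := by
  induction js with
  | nil => simp [gate, run, List.takeThrough]
  | cons j js ih =>
    rw [gate, run_bind]
    by_cases h : (child j).output v = a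
    · simp [h, ih, List.takeThrough]
    · simp [h, List.takeThrough, run]

end Alg

section Tree

variable {n : ℕ} {b : ℕ → ℕ}

def IsNode (n : ℕ) (b : ℕ → ℕ) (u : List ℕ) : Prop :=
  u.length ≤ n ∧ ∀ i (h : i < u.length), u[i] < b i

theorem isNode_nil : IsNode n b [] :=
  ⟨Nat.zero_le n, fun _ h => absurd h (Nat.not_lt_zero _)⟩

theorem IsNode.append {u : List ℕ} (hu : IsNode n b u) (hlt : u.length < n) {j : ℕ}
    (hj : j < b u.length) : IsNode n b (u ++ [j]) := by
  refine ⟨by simpa using hlt, fun i hi => ?_⟩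
  rcases lt_or_eq_of_le (Nat.le_of_lt_succ (by simpa using hi)) with h | rfl
  · simpa [List.getElem_append_left h] using hu.2 i h
  · simpa using hj

@[elab_as_elim]
theorem IsNode.induction {P : ∀ u, IsNode n b u → Prop} {u : List ℕ} (hu : IsNode n b u)
    (leaf : ∀ u (hu : IsNode n b u), u.length = n → P u hu)
    (node : ∀ u (hu : IsNode n b u) (hlt : u.length < n),
      (∀ j (hj : j < b u.length), P (u ++ [j]) (hu.append hlt hj)) → P u hu) :
    P u hu := by
  induction h : n - u.length generalizing u with
  | zero => exact leaf u hu (by have := hu.1; omega)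
  | succ k ih =>
    have hlt : u.length < n := by omega
    exact node u hu hlt fun j hj => ih (hu.append hlt hj) (by simp; omega)

theorem Leaf.length_toList (l : Leaf n b) : l.toList.length = n := by
  simp [Leaf.toList]

theorem Leaf.toList_injective : Function.Injective (Leaf.toList : Leaf n b → List ℕ) := by
  intro l l' h
  funext i
  have := congrArg (·[i]?) h
  simpa [Leaf.toList, Fin.ext_iff] using this

instance (u : List ℕ) (l : Leaf n b) : Decidable (Below u l) :=
  inferInstanceAs (Decidable (u <+: l.toList))

theorem Below.isNode {u : List ℕ} {l : Leaf n b} (h : Below u l) : IsNode n b u := by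
  have hlen : u.length ≤ n := l.length_toList ▸ h.length_le
  refine ⟨hlen, fun i hi => ?_⟩
  rw [h.getElem hi]
  simp [Leaf.toList]

theorem Below.of_append {u s : List ℕ} {l : Leaf n b} (h : Below (u ++ s) l) : Below u l :=
  (u.prefix_append s).trans h

theorem Below.eq_of_append_singleton {u : List ℕ} {j j' : ℕ} {l : Leaf n b}
    (h : Below (u ++ [j]) l) (h' : Below (u ++ [j']) l) : j = j' := by
  simpa using (List.prefix_of_prefix_length_le h h' (by simp)).eq_of_length (by simp)

theorem Below.getD_toList {u : List ℕ} {j : ℕ} {l : Leaf n b} (h : Below (u ++ [j]) l) :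
    l.toList.getD u.length 0 = j := by
  obtain ⟨s, hs⟩ := h
  simp [← hs, List.getD_eq_getElem?_getD]

theorem Below.exists_child {u : List ℕ} {l : Leaf n b} (h : Below u l) (hlt : u.length < n) :
    ∃ j < b u.length, Below (u ++ [j]) l := by
  have hi : u.length < l.toList.length := by rwa [l.length_toList]
  exact ⟨l.toList[u.length], by simp [Leaf.toList], h.append_getElem hi⟩

/-- The leaf with path `u` when `IsNode n b u` and `u.length = n`; for other `u` the reduction
mod `b i` only makes it some leaf. -/
def leafOf (hb : ∀ i : Fin n, 0 < b i) (u : List ℕ) : Leaf n b :=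
  fun i => ⟨u.getD i 0 % b i, Nat.mod_lt _ (hb i)⟩

theorem toList_leafOf (hb : ∀ i : Fin n, 0 < b i) {u : List ℕ} (hu : IsNode n b u)
    (hlen : u.length = n) : (leafOf hb u).toList = u := by
  refine List.ext_getElem (by simp [Leaf.toList, hlen]) fun i h₁ h₂ => ?_
  simp [Leaf.toList, leafOf, List.getD_eq_getElem?_getD, List.getElem?_eq_getElem h₂,
    Nat.mod_eq_of_lt (hu.2 i h₂)]

theorem below_iff_eq_leafOf (hb : ∀ i : Fin n, 0 < b i) {u : List ℕ} (hu : IsNode n b u)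
    (hlen : u.length = n) {l : Leaf n b} : Below u l ↔ l = leafOf hb u := by
  constructor
  · intro h
    refine Leaf.toList_injective ?_
    rw [toList_leafOf hb hu hlen]
    exact (h.eq_of_length (by rw [hlen, l.length_toList])).symm
  · rintro rfl
    rw [Below, toList_leafOf hb hu hlen]

abbrev isAnd (k : ℕ) : Bool := k % 2 == 0

theorem nodeVal_of_length_eq (hb : ∀ i : Fin n, 0 < b i) {u : List ℕ} (hu : IsNode n b u)
    (hlen : u.length = n) (v : Leaf n b → Bool) : nodeVal true n b v u = v (leafOf hb u) := by
  have hiff : ∀ l : Leaf n b, l.toList = u ↔ l = leafOf hb u := fun l =>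
    ⟨fun h => Leaf.toList_injective (h.trans (toList_leafOf hb hu hlen).symm),
      fun h => h ▸ toList_leafOf hb hu hlen⟩
  simp [nodeVal, hlen, evalAux, hiff]

theorem nodeVal_of_length_lt {u : List ℕ} (hlt : u.length < n) (v : Leaf n b → Bool) :
    nodeVal true n b v u =
      if ∀ j < b u.length, nodeVal true n b v (u ++ [j]) = isAnd u.length
      then isAnd u.length else !isAnd u.length := by
  obtain ⟨k, hk⟩ : ∃ k, n - u.length = k + 1 := ⟨n - u.length - 1, by omega⟩
  have hchild : ∀ j, n - (u ++ [j]).length = k := by simp; omega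
  simp only [nodeVal, hk, hchild, evalAux]
  rcases Nat.mod_two_eq_zero_or_one u.length with h | h <;>
    simp [isAnd, h, ← Bool.not_eq_true, ← decide_not]

theorem nodeVal_eq_isAnd_iff {u : List ℕ} (hlt : u.length < n) (v : Leaf n b → Bool) :
    nodeVal true n b v u = isAnd u.length ↔
      ∀ j < b u.length, nodeVal true n b v (u ++ [j]) = isAnd u.length := by
  rw [nodeVal_of_length_lt hlt]
  split_ifs with h <;> simpa using h

theorem evalAux_congr {v w : Leaf n b → Bool} (fuel : ℕ) {u : List ℕ}
    (h : ∀ l, Below u l → w l = v l) : evalAux true w fuel u = evalAux true v fuel u := by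
  induction fuel generalizing u with
  | zero =>
    simp only [evalAux]
    congr 1
    exact propext <| forall_congr' fun l => imp_congr_right fun hl => by
      rw [h l (by rw [Below, hl])]
  | succ fuel ih =>
    simp only [evalAux, ih fun l hl => h l (Below.of_append hl)]

theorem nodeVal_congr {v w : Leaf n b → Bool} {u : List ℕ}
    (h : ∀ l, Below u l → w l = v l) : nodeVal true n b w u = nodeVal true n b v u :=
  evalAux_congr _ h

end Tree

section Forced

variable {n : ℕ} {b : ℕ → ℕ}

/-- `R l x` says which values `x` leaf `l` may take; it is used both for the values of positive
probability and for the values consistent with the answers to a set of queries. -/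
def Forced (R : Leaf n b → Bool → Prop) (t : Bool) (u : List ℕ) : Prop :=
  ∀ w : Leaf n b → Bool, (∀ l, R l (w l)) → nodeVal true n b w u = t

variable {R : Leaf n b → Bool → Prop} {t : Bool} {u : List ℕ}

theorem Forced.child (h : Forced R t u) (hlt : u.length < n) (ht : isAnd u.length = t) :
    ∀ j < b u.length, Forced R t (u ++ [j]) := fun j hj w hw =>
  ht ▸ (nodeVal_eq_isAnd_iff hlt w).mp (ht ▸ h w hw) j hj

/-- Witnesses against the children being forced are glued, subtree by subtree, into a witness
against `u` being forced; the gluing stays allowed because `R` constrains each leaf separately. -/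
theorem Forced.exists_child (h : Forced R t u) (hR : ∃ w : Leaf n b → Bool, ∀ l, R l (w l))
    (hlt : u.length < n) (ht : isAnd u.length = !t) :
    ∃ j < b u.length, Forced R t (u ++ [j]) := by
  by_contra hne
  obtain ⟨w₀, hw₀⟩ := hR
  have hwit : ∀ j, ∃ w : Leaf n b → Bool, (∀ l, R l (w l)) ∧
      (j < b u.length → nodeVal true n b w (u ++ [j]) = isAnd u.length) := by
    intro j
    by_cases hj : j < b u.length
    · obtain ⟨w, hw, hval⟩ : ∃ w, (∀ l, R l (w l)) ∧ nodeVal true n b w (u ++ [j]) ≠ t := by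
        simpa [Forced] using fun h' => hne ⟨j, hj, h'⟩
      exact ⟨w, hw, fun _ => ht ▸ Bool.eq_not.mpr hval⟩
    · exact ⟨w₀, hw₀, fun h' => absurd h' hj⟩
  choose ws hwsR hws using hwit
  let w : Leaf n b → Bool := fun l => if Below u l then ws (l.toList.getD u.length 0) l else w₀ l
  have hwR : ∀ l, R l (w l) := fun l => by
    by_cases hl : Below u l <;> simp [w, hl, hwsR, hw₀]
  have hchild : ∀ j < b u.length, nodeVal true n b w (u ++ [j]) = isAnd u.length := by
    intro j hj
    rw [← hws j hj]
    refine nodeVal_congr fun l hl => ?_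
    simp only [w, if_pos hl.of_append, hl.getD_toList]
  have := (nodeVal_eq_isAnd_iff hlt w).mpr hchild
  rw [h w hwR, ht] at this
  cases t <;> simp at this

end Forced

/-- The size of a smallest certificate that a node at depth `k` has value `t`: it needs all
children at the gates for which `t` is the neutral value, and one child at the others. -/
def certSize (n : ℕ) (b : ℕ → ℕ) (t : Bool) (k : ℕ) : ℕ :=
  ∏ i ∈ Finset.Ico k n, if isAnd i = t then b i else 1

section CertSize

variable {n : ℕ} {b : ℕ → ℕ} {t : Bool}

theorem certSize_self : certSize n b t n = 1 := by
  simp [certSize]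

theorem certSize_of_lt {k : ℕ} (hk : k < n) :
    certSize n b t k = (if isAnd k = t then b k else 1) * certSize n b t (k + 1) :=
  Finset.prod_eq_prod_Ico_succ_bot hk _

theorem certSize_le_card_filter_below (hb : ∀ i : Fin n, 0 < b i) (S : Finset (Leaf n b))
    (v : Leaf n b → Bool) {u : List ℕ} (hu : IsNode n b u)
    (h : Forced (fun l x => l ∈ S → x = v l) t u) :
    certSize n b t u.length ≤ (S.filter (Below u)).card := by
  induction hu using IsNode.induction with
  | leaf u hu hlen =>
    have hmem : leafOf hb u ∈ S := by
      by_contra hS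
      have hval := h (Function.update v (leafOf hb u) !t) fun l hl => by
        rw [Function.update_of_ne (ne_of_mem_of_not_mem hl hS)]
      rw [nodeVal_of_length_eq hb hu hlen, Function.update_self] at hval
      cases t <;> simp at hval
    rw [hlen, certSize_self, Nat.one_le_iff_ne_zero, ← Nat.pos_iff_ne_zero, Finset.card_pos]
    exact ⟨leafOf hb u, Finset.mem_filter.mpr ⟨hmem, (below_iff_eq_leafOf hb hu hlen).mpr rfl⟩⟩
  | node u hu hlt ih =>
    rw [certSize_of_lt hlt]
    by_cases ht : isAnd u.length = t
    · have hchild := fun j hj => ih j hj (h.child hlt ht j hj)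
      simp only [List.length_append, List.length_singleton] at hchild
      rw [if_pos ht]
      calc b u.length * certSize n b t (u.length + 1)
          ≤ ∑ j ∈ Finset.range (b u.length), (S.filter (Below (u ++ [j]))).card := by
            simpa using Finset.card_nsmul_le_sum (Finset.range (b u.length)) _ _
              fun j hj => hchild j (Finset.mem_range.mp hj)
        _ = ((Finset.range (b u.length)).biUnion fun j => S.filter (Below (u ++ [j]))).card := by
            refine (Finset.card_biUnion fun j _ j' _ hne => ?_).symm
            exact Finset.disjoint_filter.mpr fun l _ hl hl' => hne (hl.eq_of_append_singleton hl')
        _ ≤ (S.filter (Below u)).card := by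
            refine Finset.card_le_card fun l hl => ?_
            obtain ⟨j, -, hl⟩ := Finset.mem_biUnion.mp hl
            exact Finset.mem_filter.mpr ⟨(Finset.mem_filter.mp hl).1,
              (Finset.mem_filter.mp hl).2.of_append⟩
    · obtain ⟨j, hj, hjf⟩ := h.exists_child ⟨v, fun _ _ => rfl⟩ hlt (Bool.eq_not.mpr ht)
      rw [if_neg ht, one_mul]
      calc certSize n b t (u.length + 1) ≤ (S.filter (Below (u ++ [j]))).card := by
            simpa using ih j hj hjf
        _ ≤ (S.filter (Below u)).card :=
            Finset.card_le_card (Finset.monotone_filter_right _ fun _ _ hl => hl.of_append)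

end CertSize

open scoped List in
theorem Directional.of_sublist {n : ℕ} {b : ℕ → ℕ} {A : Alg (Leaf n b)} {L : List (Leaf n b)}
    (hL : L.Nodup) (hmem : ∀ l, l ∈ L) (hA : ∀ v, A.run v <+ L) : Directional A := by
  refine ⟨(L.idxOf ·), fun l l' h => (List.idxOf_inj (hmem l)).mp h, fun v => ?_⟩
  refine (List.pairwise_iff_getElem.mpr fun i j hi hj hij => ?_).sublist ((hA v).map _)
  simpa [hL.idxOf_getElem] using hij

section DFS

open scoped List

variable {n : ℕ} {b : ℕ → ℕ} (hb : ∀ i : Fin n, 0 < b i) (σ : List ℕ → List ℕ)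

def dfsAlg (u : List ℕ) : Alg (Leaf n b) :=
  if u.length < n then Alg.gate (isAnd u.length) (fun j => dfsAlg (u ++ [j])) (σ u)
  else .query (leafOf hb u) .result
termination_by n - u.length
decreasing_by simp; omega

def leafOrder (u : List ℕ) : List (Leaf n b) :=
  if u.length < n then (σ u).flatMap fun j => leafOrder (u ++ [j])
  else [leafOf hb u]
termination_by n - u.length
decreasing_by simp; omega

theorem dfsAlg_of_lt {u : List ℕ} (hlt : u.length < n) :
    dfsAlg hb σ u = Alg.gate (isAnd u.length) (fun j => dfsAlg hb σ (u ++ [j])) (σ u) := by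
  rw [dfsAlg, if_pos hlt]

theorem dfsAlg_of_length_eq {u : List ℕ} (hlen : u.length = n) :
    dfsAlg hb σ u = .query (leafOf hb u) .result := by
  rw [dfsAlg, if_neg (by omega)]

theorem leafOrder_of_lt {u : List ℕ} (hlt : u.length < n) :
    leafOrder hb σ u = (σ u).flatMap fun j => leafOrder hb σ (u ++ [j]) := by
  rw [leafOrder, if_pos hlt]

theorem leafOrder_of_length_eq {u : List ℕ} (hlen : u.length = n) :
    leafOrder hb σ u = [leafOf hb u] := by
  rw [leafOrder, if_neg (by omega)]

variable {σ} (hσ : ∀ u, σ u ~ List.range (b u.length))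
include hσ

theorem mem_leafOrder_iff {u : List ℕ} (hu : IsNode n b u) {l : Leaf n b} :
    l ∈ leafOrder hb σ u ↔ Below u l := by
  induction hu using IsNode.induction with
  | leaf u hu hlen => simp [leafOrder_of_length_eq hb σ hlen, below_iff_eq_leafOf hb hu hlen]
  | node u hu hlt ih =>
    simp only [leafOrder_of_lt hb σ hlt, List.mem_flatMap, (hσ u).mem_iff, List.mem_range]
    constructor
    · rintro ⟨j, hj, hl⟩
      exact ((ih j hj).mp hl).of_append
    · intro hl
      obtain ⟨j, hj, hlj⟩ := hl.exists_child hlt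
      exact ⟨j, hj, (ih j hj).mpr hlj⟩

theorem nodup_leafOrder {u : List ℕ} (hu : IsNode n b u) : (leafOrder hb σ u).Nodup := by
  induction hu using IsNode.induction with
  | leaf u hu hlen => simp [leafOrder_of_length_eq hb σ hlen]
  | node u hu hlt ih =>
    rw [leafOrder_of_lt hb σ hlt, List.nodup_flatMap]
    refine ⟨fun j hj => ih j ((hσ u).mem_iff.trans List.mem_range |>.mp hj), ?_⟩
    refine ((hσ u).nodup_iff.mpr List.nodup_range).imp_of_mem fun {j j'} hj hj' hne l hl hl' => ?_
    rw [(hσ u).mem_iff, List.mem_range] at hj hj'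
    exact hne (((mem_leafOrder_iff hb hσ (hu.append hlt hj)).mp hl).eq_of_append_singleton
      ((mem_leafOrder_iff hb hσ (hu.append hlt hj')).mp hl'))

theorem run_dfsAlg_sublist {u : List ℕ} (hu : IsNode n b u) (v : Leaf n b → Bool) :
    (dfsAlg hb σ u).run v <+ leafOrder hb σ u := by
  induction hu using IsNode.induction with
  | leaf u hu hlen =>
    simp [dfsAlg_of_length_eq hb σ hlen, leafOrder_of_length_eq hb σ hlen, Alg.run]
  | node u hu hlt ih =>
    rw [dfsAlg_of_lt hb σ hlt, leafOrder_of_lt hb σ hlt, Alg.run_gate]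
    refine ((List.takeThrough_sublist _ _).flatMap _).trans (List.Sublist.flatMap_right _ ?_)
    intro j hj
    exact ih j ((hσ u).mem_iff.trans List.mem_range |>.mp hj)

theorem below_of_mem_run_dfsAlg {u : List ℕ} (hu : IsNode n b u) {v : Leaf n b → Bool}
    {l : Leaf n b} (hl : l ∈ (dfsAlg hb σ u).run v) : Below u l :=
  (mem_leafOrder_iff hb hσ hu).mp ((run_dfsAlg_sublist hb hσ hu v).subset hl)

theorem output_dfsAlg {u : List ℕ} (hu : IsNode n b u) (v : Leaf n b → Bool) :
    (dfsAlg hb σ u).output v = nodeVal true n b v u := by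
  induction hu using IsNode.induction with
  | leaf u hu hlen =>
    simp [dfsAlg_of_length_eq hb σ hlen, nodeVal_of_length_eq hb hu hlen, Alg.output]
  | node u hu hlt ih =>
    rw [dfsAlg_of_lt hb σ hlt, Alg.output_gate, nodeVal_of_length_lt hlt]
    congr 1
    refine propext (forall_congr' fun j => ?_)
    rw [(hσ u).mem_iff, List.mem_range]
    exact forall_congr' fun hj => by rw [ih j hj]

theorem isAlg_dfsAlg : IsAlg true n b (dfsAlg hb σ []) :=
  ⟨fun v => (run_dfsAlg_sublist hb hσ isNode_nil v).nodup (nodup_leafOrder hb hσ isNode_nil),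
    fun v => output_dfsAlg hb hσ isNode_nil v⟩

theorem directional_dfsAlg : Directional (dfsAlg hb σ []) :=
  .of_sublist (nodup_leafOrder hb hσ isNode_nil)
    (fun l => (mem_leafOrder_iff hb hσ isNode_nil).mpr l.toList.nil_prefix)
    (run_dfsAlg_sublist hb hσ isNode_nil)

theorem not_below_of_mem_run_dfsAlg_sibling {u w : List ℕ} {j j₀ : ℕ} (hw : IsNode n b w)
    (hlt : w.length < n) (hj : j ∈ σ w) (hne : j ≠ j₀) (hwu : w ++ [j₀] <+: u)
    {v : Leaf n b → Bool} {l : Leaf n b} (hl : l ∈ (dfsAlg hb σ (w ++ [j])).run v) :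
    ¬ Below u l := fun hlu => by
  rw [(hσ w).mem_iff, List.mem_range] at hj
  exact hne ((below_of_mem_run_dfsAlg hb hσ (hw.append hlt hj) hl).eq_of_append_singleton
    (hwu.trans hlu))

theorem blockOrAvoids_run_dfsAlg {u : List ℕ} (hu : IsNode n b u) (v : Leaf n b → Bool)
    {w : List ℕ} (hw : IsNode n b w) (hwu : w <+: u) :
    BlockOrAvoids (Below u) ((dfsAlg hb σ u).run v) ((dfsAlg hb σ w).run v) := by
  induction hw using IsNode.induction with
  | leaf w hw hlen =>
    rw [hwu.eq_of_length (by have := hwu.length_le; have := hu.1; omega)]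
    exact .self
  | node w hw hlt ih =>
    rcases eq_or_ne w u with rfl | hne
    · exact .self
    have hwu' : w.length < u.length :=
      lt_of_le_of_ne hwu.length_le fun h => hne (hwu.eq_of_length h)
    set j₀ := u[w.length]
    have hj₀ : j₀ < b w.length := hu.2 _ hwu'
    have hchild := hwu.append_getElem hwu'
    rw [dfsAlg_of_lt hb σ hlt, Alg.run_gate]
    set scanned := (σ w).takeThrough fun j => (dfsAlg hb σ (w ++ [j])).output v == isAnd w.length
    have hsub : scanned <+ σ w := List.takeThrough_sublist _ _
    by_cases hmem : j₀ ∈ scanned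
    · obtain ⟨s₁, s₂, hsplit⟩ := List.append_of_mem hmem
      have hnd : (j₀ :: (s₁ ++ s₂)).Nodup :=
        List.nodup_middle.mp (hsplit ▸ hsub.nodup ((hσ w).nodup_iff.mpr List.nodup_range))
      have hside : ∀ s ⊆ s₁ ++ s₂, ∀ l ∈ s.flatMap fun j => (dfsAlg hb σ (w ++ [j])).run v,
          ¬ Below u l := by
        intro s hs l hl
        obtain ⟨j, hj, hl⟩ := List.mem_flatMap.mp hl
        have hjs : j ∈ s₁ ++ s₂ := hs hj
        have hjscan : j ∈ scanned :=
          hsplit ▸ List.mem_append.mpr ((List.mem_append.mp hjs).imp id (List.mem_cons_of_mem _))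
        refine not_below_of_mem_run_dfsAlg_sibling hb hσ hw hlt (hsub.subset hjscan) ?_ hchild hl
        rintro rfl
        exact (List.nodup_cons.mp hnd).1 hjs
      rw [hsplit, List.flatMap_append, List.flatMap_cons, ← List.append_assoc]
      exact .append (hside s₁ (List.subset_append_left _ _)) (ih j₀ hj₀ hchild)
        (hside s₂ (List.subset_append_right _ _))
    · refine Or.inl fun l hl => ?_
      obtain ⟨j, hj, hl⟩ := List.mem_flatMap.mp hl
      exact not_below_of_mem_run_dfsAlg_sibling hb hσ hw hlt (hsub.subset hj)
        (by rintro rfl; exact hmem hj) hchild hl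

theorem depthFirst_dfsAlg : DepthFirst true n b (dfsAlg hb σ []) := by
  intro v u _ i j hij hj hi hj'
  have hu : IsNode n b u := hi.isNode
  have hblock := (blockOrAvoids_run_dfsAlg hb hσ hu v isNode_nil u.nil_prefix).infix_take
    (fun l hl => below_of_mem_run_dfsAlg hb hσ hu hl) hij hj hi hj'
  refine ⟨nodeVal true n b v u, fun w hw => ?_⟩
  rw [← output_dfsAlg hb hσ hu, ← output_dfsAlg hb hσ hu v]
  exact Alg.output_congr fun l hl => hw l (hblock.subset hl)

end DFS

section Probability

variable {n : ℕ} {b : ℕ → ℕ}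

def leafProb (d : Leaf n b → ℝ) (l : Leaf n b) (x : Bool) : ℝ :=
  if x then 1 - d l else d l

theorem sum_assgProb (d : Leaf n b → ℝ) : ∑ v : Leaf n b → Bool, assgProb d v = 1 := by
  calc ∑ v : Leaf n b → Bool, assgProb d v = ∏ l, ∑ x, leafProb d l x :=
        (Fintype.prod_sum fun l x => leafProb d l x).symm
    _ = 1 := by simp [leafProb]

theorem assgProb_nonneg {d : Leaf n b → ℝ} (hd : IsID d) (v : Leaf n b → Bool) :
    0 ≤ assgProb d v :=
  Finset.prod_nonneg fun l _ => by
    have := hd l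
    split <;> linarith

theorem assgProb_ne_zero_iff {d : Leaf n b → ℝ} {v : Leaf n b → Bool} :
    assgProb d v ≠ 0 ↔ ∀ l, leafProb d l (v l) ≠ 0 :=
  Finset.prod_ne_zero_iff.trans (by simp [leafProb])

theorem cost_eq_of_forall_length_eq {A : Alg (Leaf n b)} {d : Leaf n b → ℝ} {c : ℕ}
    (h : ∀ v, assgProb d v ≠ 0 → (A.run v).length = c) : cost A d = c := by
  calc cost A d = ∑ v : Leaf n b → Bool, assgProb d v * c := by
        refine Finset.sum_congr rfl fun v _ => ?_
        by_cases hv : assgProb d v = 0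
        · simp [hv]
        · rw [h v hv]
    _ = c := by rw [← Finset.sum_mul, sum_assgProb, one_mul]

theorem le_cost_of_forall_le_length {A : Alg (Leaf n b)} {d : Leaf n b → ℝ} (hd : IsID d)
    {c : ℕ} (h : ∀ v, assgProb d v ≠ 0 → c ≤ (A.run v).length) : (c : ℝ) ≤ cost A d := by
  calc (c : ℝ) = ∑ v : Leaf n b → Bool, assgProb d v * c := by
        rw [← Finset.sum_mul, sum_assgProb, one_mul]
    _ ≤ cost A d := by
        refine Finset.sum_le_sum fun v _ => ?_
        by_cases hv : assgProb d v = 0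
        · simp [hv]
        · exact mul_le_mul_of_nonneg_left (by exact_mod_cast h v hv) (assgProb_nonneg hd v)

theorem exists_forced_root {d : Leaf n b → ℝ} (hd : IsID d)
    (hroot : rootZeroProb true n b d = 0 ∨ rootZeroProb true n b d = 1) :
    ∃ t, Forced (fun l x => leafProb d l x ≠ 0) t [] := by
  have hforced : ∀ t, ∑ v with rootVal true n b v = !t, assgProb d v = 0 →
      Forced (fun l x => leafProb d l x ≠ 0) t [] := by
    intro t h w hw
    by_contra hne
    refine assgProb_ne_zero_iff.mpr hw ?_
    exact (Finset.sum_eq_zero_iff_of_nonneg fun v _ => assgProb_nonneg hd v).mp h w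
      (by simpa [rootVal, Bool.eq_not] using hne)
  have hzero : rootZeroProb true n b d = ∑ v with rootVal true n b v = false, assgProb d v := by
    rw [rootZeroProb, Finset.sum_filter]
  rcases hroot with h | h
  · exact ⟨true, hforced true (by simpa [hzero] using h)⟩
  · refine ⟨false, hforced false ?_⟩
    have := Finset.sum_filter_add_sum_filter_not Finset.univ
      (fun v => rootVal true n b v = false) (assgProb d)
    rw [← hzero, h, sum_assgProb] at this
    simpa using this

end Probability

section Optimal

open scoped List

variable {n : ℕ} {b : ℕ → ℕ}

open Classical in
noncomputable def forcedFirstOrder (d : Leaf n b → ℝ) (t : Bool) (u : List ℕ) : List ℕ :=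
  if h : ∃ j < b u.length, Forced (fun l x => leafProb d l x ≠ 0) t (u ++ [j]) then
    h.choose :: (List.range (b u.length)).erase h.choose
  else List.range (b u.length)

theorem forcedFirstOrder_perm (d : Leaf n b → ℝ) (t : Bool) (u : List ℕ) :
    forcedFirstOrder d t u ~ List.range (b u.length) := by
  unfold forcedFirstOrder
  split
  · next h => exact (List.perm_cons_erase (List.mem_range.mpr h.choose_spec.1)).symm
  · rfl

theorem exists_forcedFirstOrder_eq_cons {d : Leaf n b → ℝ} {t : Bool} {u : List ℕ}
    (h : ∃ j < b u.length, Forced (fun l x => leafProb d l x ≠ 0) t (u ++ [j])) :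
    ∃ j js, forcedFirstOrder d t u = j :: js ∧
      Forced (fun l x => leafProb d l x ≠ 0) t (u ++ [j]) := by
  rw [forcedFirstOrder, dif_pos h]
  exact ⟨_, _, rfl, h.choose_spec.2⟩

theorem length_run_dfsAlg_forcedFirstOrder (hb : ∀ i : Fin n, 0 < b i) {d : Leaf n b → ℝ}
    {t : Bool} {v : Leaf n b → Bool} (hv : ∀ l, leafProb d l (v l) ≠ 0) {u : List ℕ}
    (hu : IsNode n b u) (hf : Forced (fun l x => leafProb d l x ≠ 0) t u) :
    ((dfsAlg hb (forcedFirstOrder d t) u).run v).length = certSize n b t u.length := by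
  have hσ := forcedFirstOrder_perm (n := n) (b := b) d t
  induction hu using IsNode.induction with
  | leaf u hu hlen => simp [dfsAlg_of_length_eq hb _ hlen, Alg.run, hlen, certSize_self]
  | node u hu hlt ih =>
    have hmem : ∀ j ∈ forcedFirstOrder d t u, j < b u.length := fun j hj => by
      simpa using (hσ u).subset hj
    have hout : ∀ j ∈ forcedFirstOrder d t u,
        Forced (fun l x => leafProb d l x ≠ 0) t (u ++ [j]) →
        (dfsAlg hb (forcedFirstOrder d t) (u ++ [j])).output v = t := fun j hj hfj => by
      rw [output_dfsAlg hb hσ (hu.append hlt (hmem j hj))]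
      exact hfj v hv
    rw [dfsAlg_of_lt hb _ hlt, Alg.run_gate, certSize_of_lt hlt]
    by_cases ht : isAnd u.length = t
    · have hall := hf.child hlt ht
      rw [List.takeThrough_eq_self fun j hj => by simp [hout j hj (hall j (hmem j hj)), ht],
        List.length_flatMap, if_pos ht,
        List.map_congr_left (g := fun _ => certSize n b t (u.length + 1)) fun j hj => by
          simpa using ih j (hmem j hj) (hall j (hmem j hj)),
        List.map_const', List.sum_replicate, (hσ u).length_eq, List.length_range, smul_eq_mul]
    · obtain ⟨j, js, heq, hfj⟩ :=
        exists_forcedFirstOrder_eq_cons (hf.exists_child ⟨v, hv⟩ hlt (Bool.eq_not.mpr ht))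
      have hj : j ∈ forcedFirstOrder d t u := heq ▸ List.mem_cons_self
      have hstop : ((dfsAlg hb (forcedFirstOrder d t) (u ++ [j])).output v == isAnd u.length)
          = false := by
        rw [hout j hj hfj, beq_eq_false_iff_ne]
        exact Ne.symm ht
      simp only [heq, List.takeThrough, hstop, if_neg ht, one_mul]
      simpa using ih j (hmem j hj) hfj

theorem certSize_le_length_run (hb : ∀ i : Fin n, 0 < b i) {A : Alg (Leaf n b)}
    (hA : IsAlg true n b A) (v : Leaf n b → Bool) :
    certSize n b (rootVal true n b v) 0 ≤ (A.run v).length := by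
  classical
  have hforced : Forced (fun l x => l ∈ (A.run v).toFinset → x = v l) (rootVal true n b v) [] :=
    fun w hw => by
      rw [← rootVal, ← hA.2 w, ← hA.2 v]
      exact Alg.output_congr fun l hl => hw l (List.mem_toFinset.mpr hl)
  calc certSize n b (rootVal true n b v) 0
      ≤ ((A.run v).toFinset.filter (Below [])).card :=
        certSize_le_card_filter_below hb _ v isNode_nil hforced
    _ ≤ (A.run v).toFinset.card := Finset.card_filter_le _ _
    _ ≤ (A.run v).length := List.toFinset_card_le _

end Optimal

theorem balanced_degenerate_root_depth_first_optimal_general (n : ℕ) (b : ℕ → ℕ)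
    (hb : ∀ i, i < n → 2 ≤ b i)
    (d : Leaf n b → ℝ) (hID : IsID d)
    (hroot : rootZeroProb true n b d = 0 ∨ rootZeroProb true n b d = 1) :
    ∃ B₀ : Alg (Leaf n b), IsAlg true n b B₀ ∧
      DepthFirst true n b B₀ ∧ Directional B₀ ∧
      cost B₀ d = minCost true n b d := by
  have hb' : ∀ i : Fin n, 0 < b i := fun i => by have := hb i i.isLt; omega
  obtain ⟨t, ht⟩ := exists_forced_root hID hroot
  have hσ := forcedFirstOrder_perm (n := n) (b := b) d t
  have hB₀ := isAlg_dfsAlg hb' hσ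
  have hcost : cost (dfsAlg hb' (forcedFirstOrder d t) []) d = certSize n b t 0 :=
    cost_eq_of_forall_length_eq fun v hv =>
      length_run_dfsAlg_forcedFirstOrder hb' (assgProb_ne_zero_iff.mp hv) isNode_nil ht
  refine ⟨_, hB₀, depthFirst_dfsAlg hb' hσ, directional_dfsAlg hb' hσ, ?_⟩
  refine (IsLeast.csInf_eq ?_).symm
  refine ⟨⟨_, hB₀, rfl⟩, ?_⟩
  rintro _ ⟨A, hA, rfl⟩
  rw [hcost]
  refine le_cost_of_forall_le_length hID fun v hv => ?_
  rw [← show rootVal true n b v = t from ht v (assgProb_ne_zero_iff.mp hv)]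
  exact certSize_le_length_run hb' hA v

/-- For a balanced AND-OR tree (height `n ≥ 1`, every internal node at
depth `i` has `b i ≥ 2` children) and an independent distribution `d` under which the
probability of the root having value 0 is either 0 or 1, some depth-first directional
algorithm `B₀` attains the minimum cost over all algorithms against `d`. -/
theorem balanced_degenerate_root_depth_first_optimal (n : ℕ) (hn : 1 ≤ n) (b : ℕ → ℕ)
    (hb : ∀ i, i < n → 2 ≤ b i)
    (d : Leaf n b → ℝ) (hID : IsID d)
    (hroot : rootZeroProb true n b d = 0 ∨ rootZeroProb true n b d = 1) :
    ∃ B₀ : Alg (Leaf n b), IsAlg true n b B₀ ∧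
      DepthFirst true n b B₀ ∧ Directional B₀ ∧
      cost B₀ d = minCost true n b d :=
  balanced_degenerate_root_depth_first_optimal_general n b hb d hID hroot
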